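/- arXiv:2411.15846 — 4 statements merged into one kernel-verified Lean document; each statement's English description precedes it below -/
import Mathlib

section
/- Let x : ℝ → ℝⁿ be a twice differentiable curve with x(t) ≠ 0 for all t which solves the Kepler problem ẍ(t) = −x(t)/|x(t)|³. Then for every index i = 1, …, n, the component of the Laplace–Runge–Lenz vector A_i(t) = x_i(t) |ẋ(t)|² − ẋ_i(t) ⟨x(t), ẋ(t)⟩ − x_i(t)/|x(t)| is constant in t, where ⟨·,·⟩ is the Euclidean inner product. -/
/-!
Along a Kepler orbit the vector `A = |ẋ|² x − ⟨x, ẋ⟩ ẋ − x/|x|` has derivative zero: substituting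
`ẍ = −x/r³` and `ṙ = ⟨x, ẋ⟩/r`, the terms in `ẋ` and in `x` cancel separately. A curve with
vanishing derivative everywhere is constant, and so are its coordinates.
-/

open scoped RealInnerProductSpace

section

variable {F : Type*} [NormedAddCommGroup F] [InnerProductSpace ℝ F]

theorem HasDerivAt.norm {f : ℝ → F} {f' : F} {t : ℝ} (hf : HasDerivAt f f' t) (h0 : f t ≠ 0) :
    HasDerivAt (‖f ·‖) (⟪f t, f'⟫ / ‖f t‖) t := by
  have hsq : ‖f t‖ ^ 2 ≠ 0 := by positivity
  convert hf.norm_sq.sqrt hsq using 1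
  · simp [Real.sqrt_sq (norm_nonneg _)]
  · rw [Real.sqrt_sq (norm_nonneg _)]
    ring

noncomputable def laplaceRungeLenz (q p : F) : F := ‖p‖ ^ 2 • q - ⟪q, p⟫ • p - ‖q‖⁻¹ • q

theorem hasDerivAt_laplaceRungeLenz_of_kepler {q p : ℝ → F} {t : ℝ}
    (hq : HasDerivAt q (p t) t) (hp : HasDerivAt p (-(‖q t‖ ^ 3)⁻¹ • q t) t) (h0 : q t ≠ 0) :
    HasDerivAt (fun t ↦ laplaceRungeLenz (q t) (p t)) 0 t := by
  have hr : ‖q t‖ ≠ 0 := norm_ne_zero_iff.mpr h0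
  have h : HasDerivAt (fun t ↦ laplaceRungeLenz (q t) (p t)) _ t :=
    ((hp.norm_sq.smul hq).sub ((hq.inner ℝ hp).smul hp)).sub (((hq.norm h0).inv hr).smul hq)
  refine h.congr_deriv ?_
  simp only [inner_smul_right, real_inner_self_eq_norm_sq, real_inner_comm (q t) (p t),
    Pi.inv_apply]
  match_scalars <;> field_simp <;> ring

theorem laplaceRungeLenz_eq_of_kepler {q p : ℝ → F}
    (hq : ∀ t, HasDerivAt q (p t) t) (hp : ∀ t, HasDerivAt p (-(‖q t‖ ^ 3)⁻¹ • q t) t)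
    (h0 : ∀ t, q t ≠ 0) (t s : ℝ) :
    laplaceRungeLenz (q t) (p t) = laplaceRungeLenz (q s) (p s) :=
  have h := fun u ↦ hasDerivAt_laplaceRungeLenz_of_kepler (hq u) (hp u) (h0 u)
  is_const_of_deriv_eq_zero (fun u ↦ (h u).differentiableAt) (fun u ↦ (h u).deriv) t s

end

theorem EuclideanSpace.laplaceRungeLenz_apply {n : ℕ} (q p : EuclideanSpace ℝ (Fin n))
    (i : Fin n) : laplaceRungeLenz q p i = q i * ‖p‖ ^ 2 - p i * ⟪q, p⟫ - q i / ‖q‖ := by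
  simp only [laplaceRungeLenz, PiLp.sub_apply, PiLp.smul_apply, smul_eq_mul]
  ring

/-- **Conservation of the Laplace–Runge–Lenz vector for the Kepler problem.**
If `x : ℝ → ℝⁿ` is twice differentiable, never zero, and solves the Kepler problem
`ẍ = −x/|x|³`, then for every index `i` the LRL component
`A_i(t) = x_i(t) |ẋ(t)|² − ẋ_i(t) ⟨x(t), ẋ(t)⟩ − x_i(t)/|x(t)|` is constant in `t`. -/
theorem kepler_LRL_conserved (n : ℕ) (x : ℝ → EuclideanSpace ℝ (Fin n))
    (hx1 : ∀ t, DifferentiableAt ℝ x t)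
    (hx2 : ∀ t, DifferentiableAt ℝ (deriv x) t)
    (hx0 : ∀ t, x t ≠ 0)
    (hkep : ∀ t, deriv (deriv x) t = -((‖x t‖ ^ 3)⁻¹ • x t)) :
    ∀ (i : Fin n), ∀ t s : ℝ,
      x t i * ‖deriv x t‖ ^ 2 - deriv x t i * (inner ℝ (x t) (deriv x t) : ℝ)
        - x t i / ‖x t‖ =
      x s i * ‖deriv x s‖ ^ 2 - deriv x s i * (inner ℝ (x s) (deriv x s) : ℝ)
        - x s i / ‖x s‖ := by
  intro i t s
  have hp : ∀ t, HasDerivAt (deriv x) (-(‖x t‖ ^ 3)⁻¹ • x t) t := fun t ↦ by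
    simpa [hkep t] using (hx2 t).hasDerivAt
  have h := laplaceRungeLenz_eq_of_kepler (fun t ↦ (hx1 t).hasDerivAt) hp hx0 t s
  simpa only [EuclideanSpace.laplaceRungeLenz_apply] using congrArg (· i) h
end

section
/- Let N ≥ 1, h > 0, and let φ^{[1]}, …, φ^{[N]} : ℝᴺ → ℝ be differentiable. For a, b ∈ ℝᴺ and i = 1, …, N write â^i = a + Σ_{j=1}^{i} (b_j − a_j) e_j, where e_j is the j-th standard basis vector, and for a sequence (x_k) in ℝᴺ write x̂_k^i for this point with a = x_k, b = x_{k+1}. Define p_k = (x_{k+1} − x_k)/h + h Σ_{i=2}^{N} (Σ_{j=1}^{i−1} (∂φ^{[j]}/∂x_i)(x̂_k^j)) e_i. Then the sequence (x_k) satisfies the discrete Euler–Lagrange equations of the split discrete Lagrangian 𝕃(a,b) = |b − a|²/(2h²) − Σ_{i=1}^{N} φ^{[i]}(â^i), namely (x¹_{k+1} − 2x¹_k + x¹_{k−1})/h² = −(∂/∂x_1)(Σ_{j=1}^{N} φ^{[j]})(x̂_{k−1}^j) and, for i = 2, …, N, (xⁱ_{k+1} − 2xⁱ_k + xⁱ_{k−1})/h²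 = −(∂/∂x_i)(Σ_{j=1}^{i−1} φ^{[j]}(x̂_k^j) + Σ_{j=i}^{N} φ^{[j]}(x̂_{k−1}^j)), for all k ≥ 1, if and only if the pairs (x_k, p_k) satisfy the composition scheme x_{k+1} = x_k + h p_k − h² Σ_{i=2}^{N} (Σ_{j=1}^{i−1} (∂φ^{[j]}/∂x_i)(x̂_k^j)) e_i and p_{k+1} = p_k − h Σ_{i=1}^{N} ∇φ^{[i]}(x̂_k^i) for all k ≥ 0; i.e., the variational integrator of 𝕃 is equivalent to the composition of the N explicit symplectic maps Φ_{H_i}^h. -/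
/-!
Write `c_k` for the vector with entries `Σ_{j<i} ∂_i φ^[j](x̂_k^j)` and `g_k = Σ_i ∇φ^[i](x̂_k^i)`.
The definition `p_k = (x_{k+1} - x_k)/h + h c_k` makes the position update of the scheme an
identity, and `p_{k+1} - p_k + h g_k = h ((x_{k+2} - 2x_{k+1} + x_k)/h² + c_{k+1} + g_k - c_k)`.
In the `i`-th entry `g_k - c_k` keeps exactly the partials with `j ≥ i`, so the momentum update
is the discrete Euler–Lagrange equation at `k + 1`.
-/

section ScaledSecondDifference

variable {K V : Type*} [Field K] [AddCommGroup V] [Module K V] {h : K} {x p c : ℕ → V}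

theorem position_step_of_momentum (hh : h ≠ 0)
    (hp : ∀ k, p k = h⁻¹ • (x (k + 1) - x k) + h • c k) (k : ℕ) :
    x (k + 1) = x k + h • p k - h ^ 2 • c k := by
  rw [hp k, smul_add, smul_inv_smul₀ hh, smul_smul, ← pow_two]
  abel

theorem momentum_step_iff (hh : h ≠ 0)
    (hp : ∀ k, p k = h⁻¹ • (x (k + 1) - x k) + h • c k) (g : V) (k : ℕ) :
    p (k + 1) = p k - h • g ↔
      (h ^ 2)⁻¹ • (x (k + 2) - (2 : K) • x (k + 1) + x k) = -(c (k + 1) + (g - c k)) := by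
  have hdiff : p (k + 1) + h • g - p k =
      h • ((h ^ 2)⁻¹ • (x (k + 2) - (2 : K) • x (k + 1) + x k) + (c (k + 1) + (g - c k))) := by
    rw [hp, hp, smul_add, smul_smul, pow_two, mul_inv, ← mul_assoc, mul_inv_cancel₀ hh, one_mul]
    module
  rw [← sub_eq_zero, sub_sub_eq_add_sub, hdiff, smul_eq_zero_iff_right hh,
    ← eq_neg_iff_add_eq_zero]

theorem forall_second_difference_iff_forall_steps (hh : h ≠ 0)
    (hp : ∀ k, p k = h⁻¹ • (x (k + 1) - x k) + h • c k) (g : ℕ → V) :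
    (∀ k, 1 ≤ k → (h ^ 2)⁻¹ • (x (k + 1) - (2 : K) • x k + x (k - 1)) =
        -(c k + (g (k - 1) - c (k - 1)))) ↔
      ∀ k, x (k + 1) = x k + h • p k - h ^ 2 • c k ∧ p (k + 1) = p k - h • g k := by
  refine ⟨fun H k => ⟨position_step_of_momentum hh hp k, ?_⟩, ?_⟩
  · exact (momentum_step_iff hh hp (g k) k).2 (H (k + 1) k.succ_pos)
  · rintro H (_ | k) hk
    · omega
    · exact (momentum_step_iff hh hp (g k) k).1 (H k).2

end ScaledSecondDifference

theorem Finset.sum_Iio_add_sum_Ici {ι M : Type*} [LinearOrder ι] [Fintype ι]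
    [LocallyFiniteOrderBot ι] [LocallyFiniteOrderTop ι] [AddCommMonoid M] (f : ι → M) (i : ι) :
    ∑ j ∈ Iio i, f j + ∑ j ∈ Ici i, f j = ∑ j, f j := by
  rw [← sum_union (disjoint_left.2 fun j hj hj' => (mem_Ici.1 hj').not_gt (mem_Iio.1 hj))]
  congr 1
  ext j
  simp [lt_or_ge]

namespace EuclideanSpace

theorem sum_smul_single_apply {ι 𝕜 : Type*} [DecidableEq ι] [RCLike 𝕜] (s : Finset ι)
    (c : ι → 𝕜) (i : ι) :
    (∑ j ∈ s, c j • single j (1 : 𝕜)) i = if i ∈ s then c i else 0 := by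
  simp [WithLp.ofLp_sum, Finset.sum_apply, Pi.single_apply]

theorem gradient_apply {ι : Type*} [Fintype ι] [DecidableEq ι] (f : EuclideanSpace ℝ ι → ℝ)
    (y : EuclideanSpace ℝ ι) (i : ι) :
    gradient f y i = fderiv ℝ f y (single i 1) := by
  rw [← toDual_gradient, InnerProductSpace.toDual_apply_apply, inner_single_right]
  simp

/-- The filter is harmless, since `Iio i` is empty when `i.val = 0`. -/
theorem sum_filter_ne_zero_sum_Iio_smul_single_apply {N : ℕ} (D : Fin N → Fin N → ℝ)
    (i : Fin N) :
    (∑ i' ∈ Finset.univ.filter (fun i' : Fin N => i'.val ≠ 0),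
      (∑ j ∈ Finset.Iio i', D j i') • single i' (1 : ℝ)) i = ∑ j ∈ Finset.Iio i, D j i := by
  rw [sum_smul_single_apply]
  split_ifs with hi
  · rfl
  · refine (Finset.sum_eq_zero fun j hj => absurd (Finset.mem_Iio.1 hj) ?_).symm
    simp_all [Fin.lt_def]

end EuclideanSpace

theorem split_variational_integrator_eq_composition_general (N : ℕ)
    (h : ℝ) (hh : 0 < h)
    (φ : Fin N → EuclideanSpace ℝ (Fin N) → ℝ)
    (hat : EuclideanSpace ℝ (Fin N) → EuclideanSpace ℝ (Fin N) → Fin N →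
      EuclideanSpace ℝ (Fin N))
    (x p : ℕ → EuclideanSpace ℝ (Fin N))
    (hp : ∀ k, p k = h⁻¹ • (x (k + 1) - x k) +
      h • ∑ i ∈ Finset.univ.filter (fun i : Fin N => i.val ≠ 0),
        (∑ j ∈ Finset.Iio i,
          fderiv ℝ (φ j) (hat (x k) (x (k + 1)) j) (EuclideanSpace.single i 1)) •
            EuclideanSpace.single i 1) :
    (∀ k : ℕ, 1 ≤ k → ∀ i : Fin N,
        (x (k + 1) i - 2 * x k i + x (k - 1) i) / h ^ 2 =
          -((∑ j ∈ Finset.Iio i,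
              fderiv ℝ (φ j) (hat (x k) (x (k + 1)) j) (EuclideanSpace.single i 1)) +
            (∑ j ∈ Finset.Ici i,
              fderiv ℝ (φ j) (hat (x (k - 1)) (x k) j) (EuclideanSpace.single i 1)))) ↔
    (∀ k : ℕ,
        x (k + 1) = x k + h • p k - (h ^ 2) •
          ∑ i ∈ Finset.univ.filter (fun i : Fin N => i.val ≠ 0),
            (∑ j ∈ Finset.Iio i,
              fderiv ℝ (φ j) (hat (x k) (x (k + 1)) j) (EuclideanSpace.single i 1)) •
                EuclideanSpace.single i 1 ∧
        p (k + 1) = p k - h • ∑ i, gradient (φ i) (hat (x k) (x (k + 1)) i)) := by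
  refine Iff.trans ?_ (forall_second_difference_iff_forall_steps hh.ne' hp _)
  refine forall₂_congr fun k hk => ?_
  rw [← (WithLp.ofLp_injective 2).eq_iff, funext_iff]
  refine forall_congr' fun i => ?_
  simp only [PiLp.add_apply, PiLp.sub_apply, PiLp.neg_apply, PiLp.smul_apply, smul_eq_mul,
    EuclideanSpace.sum_filter_ne_zero_sum_Iio_smul_single_apply, WithLp.ofLp_sum, Finset.sum_apply,
    EuclideanSpace.gradient_apply, ← Finset.sum_Iio_add_sum_Ici _ i, add_sub_cancel_left,
    Nat.sub_add_cancel hk, div_eq_inv_mul]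

/-- **Equivalence of the split variational integrator with the composition of explicit
symplectic maps.** For the split discrete Lagrangian
`𝕃(a,b) = |b−a|²/(2h²) − Σᵢ φ^[i](âⁱ)` with `âⁱ = a + Σ_{j≤i}(b_j − a_j)e_j`, and
momenta `p_k = (x_{k+1} − x_k)/h + h Σ_{i≥2}(Σ_{j<i} ∂φ^[j]/∂x_i(x̂_k^j)) e_i`, the
sequence `(x_k)` satisfies the discrete Euler–Lagrange equations for all `k ≥ 1`
iff `(x_k, p_k)` satisfies the composition scheme
`x_{k+1} = x_k + h p_k − h² Σ_{i≥2}(Σ_{j<i} ∂φ^[j]/∂x_i(x̂_k^j)) e_i`,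
`p_{k+1} = p_k − h Σᵢ ∇φ^[i](x̂_k^i)` for all `k ≥ 0`.
(Indices are zero-based: `i ≥ 2` becomes `i ≠ 0`, `j ≤ i − 1` becomes `j < i`,
and for `i = 0` the first sum in the Euler–Lagrange equation is empty.) -/
theorem split_variational_integrator_eq_composition (N : ℕ) (hN : 1 ≤ N)
    (h : ℝ) (hh : 0 < h)
    (φ : Fin N → EuclideanSpace ℝ (Fin N) → ℝ)
    (hφ : ∀ i, Differentiable ℝ (φ i))
    (hat : EuclideanSpace ℝ (Fin N) → EuclideanSpace ℝ (Fin N) → Fin N →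
      EuclideanSpace ℝ (Fin N))
    (hhat : ∀ a b i, hat a b i =
      a + ∑ j ∈ Finset.Iic i, (b j - a j) • EuclideanSpace.single j 1)
    (x p : ℕ → EuclideanSpace ℝ (Fin N))
    (hp : ∀ k, p k = h⁻¹ • (x (k + 1) - x k) +
      h • ∑ i ∈ Finset.univ.filter (fun i : Fin N => i.val ≠ 0),
        (∑ j ∈ Finset.Iio i,
          fderiv ℝ (φ j) (hat (x k) (x (k + 1)) j) (EuclideanSpace.single i 1)) •
            EuclideanSpace.single i 1) :
    (∀ k : ℕ, 1 ≤ k → ∀ i : Fin N,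
        (x (k + 1) i - 2 * x k i + x (k - 1) i) / h ^ 2 =
          -((∑ j ∈ Finset.Iio i,
              fderiv ℝ (φ j) (hat (x k) (x (k + 1)) j) (EuclideanSpace.single i 1)) +
            (∑ j ∈ Finset.Ici i,
              fderiv ℝ (φ j) (hat (x (k - 1)) (x k) j) (EuclideanSpace.single i 1)))) ↔
    (∀ k : ℕ,
        x (k + 1) = x k + h • p k - (h ^ 2) •
          ∑ i ∈ Finset.univ.filter (fun i : Fin N => i.val ≠ 0),
            (∑ j ∈ Finset.Iio i,
              fderiv ℝ (φ j) (hat (x k) (x (k + 1)) j) (EuclideanSpace.single i 1)) •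
                EuclideanSpace.single i 1 ∧
        p (k + 1) = p k - h • ∑ i, gradient (φ i) (hat (x k) (x (k + 1)) i)) :=
  split_variational_integrator_eq_composition_general N h hh φ hat x p hp
end

section
/- Let λ > 0 and h > 0 with λ h² < 4. Then the series Σ_{k=1}^∞ (2 ((k−1)!)² / (2k)!) h^{2k−2} λ^k converges and its sum equals ((2/h) · arcsin(√λ h / 2))². Consequently, the modified equation of the discretization (x_{n+1} − 2x_n + x_{n−1})/h² = −λ x_n of the linear oscillator ẍ = −λx has the convergent closed form ẍ = −(Σ_{k=1}^∞ (2((k−1)!)²/(2k)!) h^{2k−2} λ^k) x = −((2/h) arcsin(√λ h/2))² x. -/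
/-!
The coefficients `c k = 2 (k!)² 4^k / (2k+2)!` satisfy `(2k+4)(2k+3) c (k+1) = (2k+2)² c k`, which
says that `F y = ∑ c k y^(2k+2)` solves `(1 - y²) F'' - y F' = 2` on `(-1, 1)`. Hence
`√(1 - y²) F'` and `2 arcsin` have the same derivative and both vanish at `0`, so
`F' = 2 arcsin / √(1 - y²) = (arcsin²)'` and `F = arcsin²`. At `y = √λ h / 2` the `k`-th term
of `F` is `h² / 4` times the `k`-th term of the series.

For the scheme: if `ẍ = -ω² x`, then `u p = x (t + p) + x (t - p) - 2 cos (ω p) x t` solves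
`u'' = -ω² u` with `u 0 = u' 0 = 0`, so its energy `u'² + ω² u²` vanishes and `u = 0`. With
`ω h = 2 arcsin (√λ h / 2)` one gets `2 cos (ω h) = 2 - λ h²`.
-/

open Real Set
open scoped Nat

noncomputable def arcsinSqCoeff (k : ℕ) : ℝ := 2 * (k ! : ℝ) ^ 2 / (2 * k + 2)! * 4 ^ k

theorem arcsinSqCoeff_zero : arcsinSqCoeff 0 = 1 := by norm_num [arcsinSqCoeff]

theorem arcsinSqCoeff_pos (k : ℕ) : 0 < arcsinSqCoeff k := by
  unfold arcsinSqCoeff; positivity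

theorem arcsinSqCoeff_succ (k : ℕ) :
    (2 * k + 4) * (2 * k + 3) * arcsinSqCoeff (k + 1) = (2 * k + 2) ^ 2 * arcsinSqCoeff k := by
  rw [arcsinSqCoeff, arcsinSqCoeff, show 2 * (k + 1) + 2 = (2 * k + 2) + 1 + 1 by ring,
    Nat.factorial_succ, Nat.factorial_succ, Nat.factorial_succ]
  push_cast
  field_simp
  ring

theorem arcsinSqCoeff_le_one (k : ℕ) : arcsinSqCoeff k ≤ 1 := by
  induction k with
  | zero => exact arcsinSqCoeff_zero.le
  | succ k ih =>
    have hrec := arcsinSqCoeff_succ k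
    nlinarith [arcsinSqCoeff_pos k, arcsinSqCoeff_pos (k + 1)]

noncomputable def arcsinSqTermDeriv (j k : ℕ) (y : ℝ) : ℝ :=
  arcsinSqCoeff k * (2 * k + 2).descFactorial j * y ^ (2 * k + 2 - j)

noncomputable def arcsinSqSeriesDeriv (j : ℕ) (y : ℝ) : ℝ := ∑' k, arcsinSqTermDeriv j k y

theorem hasDerivAt_arcsinSqTermDeriv (j k : ℕ) (y : ℝ) :
    HasDerivAt (arcsinSqTermDeriv j k) (arcsinSqTermDeriv (j + 1) k y) y := by
  refine ((hasDerivAt_pow (2 * k + 2 - j) y).const_mul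
    (arcsinSqCoeff k * (2 * k + 2).descFactorial j)).congr_deriv ?_
  rw [arcsinSqTermDeriv, Nat.descFactorial_succ, Nat.sub_sub]
  push_cast
  ring

theorem abs_arcsinSqTermDeriv_le {j : ℕ} (hj : j ≤ 2) (k : ℕ) {y r : ℝ} (hy : |y| ≤ r)
    (hr : r ≤ 1) : |arcsinSqTermDeriv j k y| ≤ (2 * k + 2) ^ 2 * (r ^ 2) ^ k := by
  have hc := arcsinSqCoeff_le_one k
  have hd : ((2 * k + 2).descFactorial j : ℝ) ≤ (2 * k + 2) ^ 2 := by
    exact_mod_cast (Nat.descFactorial_le_pow _ j).trans (Nat.pow_le_pow_right (by omega) hj)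
  have hpow : |y| ^ (2 * k + 2 - j) ≤ r ^ (2 * k) :=
    (pow_le_pow_left₀ (abs_nonneg y) hy _).trans
      (pow_le_pow_of_le_one ((abs_nonneg y).trans hy) hr (by omega))
  rw [arcsinSqTermDeriv, abs_mul, abs_mul, abs_pow, abs_of_pos (arcsinSqCoeff_pos k),
    Nat.abs_cast, ← pow_mul]
  calc arcsinSqCoeff k * _ * |y| ^ (2 * k + 2 - j) ≤ 1 * (2 * k + 2) ^ 2 * r ^ (2 * k) := by
        gcongr
    _ = _ := by ring

theorem summable_two_mul_add_two_sq_mul_geometric {q : ℝ} (hq : |q| < 1) :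
    Summable fun k : ℕ => (2 * k + 2 : ℝ) ^ 2 * q ^ k := by
  have hq' : ‖q‖ < 1 := hq
  have h2 := summable_pow_mul_geometric_of_norm_lt_one 2 hq'
  have h1 := summable_pow_mul_geometric_of_norm_lt_one 1 hq'
  have h0 := summable_geometric_of_norm_lt_one hq'
  exact (((h2.mul_left 4).add (h1.mul_left 8)).add (h0.mul_left 4)).congr fun k => by ring

theorem summable_arcsinSqTermDeriv {j : ℕ} (hj : j ≤ 2) {y : ℝ} (hy : |y| < 1) :
    Summable fun k => arcsinSqTermDeriv j k y := by
  refine .of_norm_bounded (summable_two_mul_add_two_sq_mul_geometric (q := |y| ^ 2) ?_)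
    fun k => abs_arcsinSqTermDeriv_le hj k le_rfl hy.le
  rw [abs_pow, abs_abs]
  exact pow_lt_one₀ (abs_nonneg y) hy two_ne_zero

theorem hasDerivAt_arcsinSqSeriesDeriv {j : ℕ} (hj : j ≤ 1) {y : ℝ} (hy : |y| < 1) :
    HasDerivAt (arcsinSqSeriesDeriv j) (arcsinSqSeriesDeriv (j + 1) y) y := by
  obtain ⟨r, hyr, hr⟩ := exists_between hy
  have hr₀ : 0 < r := (abs_nonneg y).trans_lt hyr
  have hr₂ : |r ^ 2| < 1 := by
    rw [abs_pow, abs_of_pos hr₀]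
    exact pow_lt_one₀ hr₀.le hr two_ne_zero
  exact hasDerivAt_tsum_of_isPreconnected (summable_two_mul_add_two_sq_mul_geometric hr₂)
    Metric.isOpen_ball (convex_ball 0 r).isPreconnected
    (fun k z _ => hasDerivAt_arcsinSqTermDeriv j k z)
    (fun k z hz => abs_arcsinSqTermDeriv_le (by omega) k (mem_ball_zero_iff.1 hz).le hr.le)
    (Metric.mem_ball_self hr₀) (summable_arcsinSqTermDeriv (by omega) (by norm_num))
    (mem_ball_zero_iff.2 hyr)

theorem arcsinSqTermDeriv_one (k : ℕ) (y : ℝ) :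
    arcsinSqTermDeriv 1 k y = arcsinSqCoeff k * (2 * k + 2) * y ^ (2 * k + 1) := by
  simp [arcsinSqTermDeriv]

theorem arcsinSqTermDeriv_two (k : ℕ) (y : ℝ) :
    arcsinSqTermDeriv 2 k y = arcsinSqCoeff k * ((2 * k + 2) * (2 * k + 1)) * y ^ (2 * k) := by
  rw [arcsinSqTermDeriv, Nat.descFactorial_succ, Nat.descFactorial_one,
    show 2 * k + 2 - 1 = 2 * k + 1 by omega, show 2 * k + 2 - 2 = 2 * k by omega]
  push_cast
  ring

theorem arcsinSqSeriesDeriv_ode {y : ℝ} (hy : |y| < 1) :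
    (1 - y ^ 2) * arcsinSqSeriesDeriv 2 y - y * arcsinSqSeriesDeriv 1 y = 2 := by
  have h₁ := summable_arcsinSqTermDeriv (by norm_num : 1 ≤ 2) hy
  have h₂ := summable_arcsinSqTermDeriv le_rfl hy
  have hstep : ∀ k, (1 - y ^ 2) * arcsinSqTermDeriv 2 k y - y * arcsinSqTermDeriv 1 k y
      = arcsinSqTermDeriv 2 k y - arcsinSqTermDeriv 2 (k + 1) y := by
    intro k
    simp only [arcsinSqTermDeriv_one, arcsinSqTermDeriv_two]
    push_cast
    rw [show 2 * (k + 1) = 2 * k + 2 by ring, pow_add, pow_succ]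
    linear_combination y ^ (2 * k) * y ^ 2 * arcsinSqCoeff_succ k
  calc (1 - y ^ 2) * arcsinSqSeriesDeriv 2 y - y * arcsinSqSeriesDeriv 1 y
      = ∑' k, ((1 - y ^ 2) * arcsinSqTermDeriv 2 k y - y * arcsinSqTermDeriv 1 k y) := by
        rw [(h₂.mul_left _).tsum_sub (h₁.mul_left _), tsum_mul_left, tsum_mul_left]
        rfl
    _ = ∑' k, (arcsinSqTermDeriv 2 k y - arcsinSqTermDeriv 2 (k + 1) y) := tsum_congr hstep
    _ = arcsinSqTermDeriv 2 0 y := by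
        rw [h₂.tsum_sub ((summable_nat_add_iff 1).2 h₂), h₂.tsum_eq_zero_add]
        ring
    _ = 2 := by simp [arcsinSqTermDeriv_two, arcsinSqCoeff_zero]

theorem IsOpen.eqOn_of_hasDerivAt {𝕜 G : Type*} [RCLike 𝕜] [NormedAddCommGroup G]
    [NormedSpace 𝕜 G] {s : Set 𝕜} (hs : IsOpen s) (hs' : IsPreconnected s) {f g f' : 𝕜 → G}
    (hf : ∀ y ∈ s, HasDerivAt f (f' y) y) (hg : ∀ y ∈ s, HasDerivAt g (f' y) y) {x : 𝕜}
    (hx : x ∈ s) (hfg : f x = g x) : EqOn f g s :=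
  hs.eqOn_of_deriv_eq hs' (fun y hy => (hf y hy).differentiableAt.differentiableWithinAt)
    (fun y hy => (hg y hy).differentiableAt.differentiableWithinAt)
    (fun y hy => (hf y hy).deriv.trans (hg y hy).deriv.symm) hx hfg

theorem hasDerivAt_sqrt_one_sub_sq {y : ℝ} (hy : 1 - y ^ 2 ≠ 0) :
    HasDerivAt (fun z => √(1 - z ^ 2)) (-y / √(1 - y ^ 2)) y := by
  refine (((hasDerivAt_pow 2 y).const_sub 1).sqrt hy).congr_deriv ?_
  field_simp
  ring

theorem sqrt_one_sub_sq_mul_arcsinSqSeriesDeriv_one {y : ℝ} (hy : |y| < 1) :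
    √(1 - y ^ 2) * arcsinSqSeriesDeriv 1 y = 2 * arcsin y := by
  refine isOpen_Ioo.eqOn_of_hasDerivAt isPreconnected_Ioo
    (f := fun z => √(1 - z ^ 2) * arcsinSqSeriesDeriv 1 z) (g := fun z => 2 * arcsin z)
    (f' := fun z => 2 * (1 / √(1 - z ^ 2)))
    (fun z hz => ?_) (fun z hz => ?_) (x := 0) (by norm_num) ?_ (abs_lt.1 hy)
  · have hz' : |z| < 1 := abs_lt.2 hz
    have hz₁ : 0 < 1 - z ^ 2 := sub_pos.2 ((sq_lt_one_iff_abs_lt_one z).2 hz')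
    have hpos : 0 < √(1 - z ^ 2) := sqrt_pos.2 hz₁
    have hsq : √(1 - z ^ 2) ^ 2 = 1 - z ^ 2 := sq_sqrt hz₁.le
    refine ((hasDerivAt_sqrt_one_sub_sq hz₁.ne').mul
      (hasDerivAt_arcsinSqSeriesDeriv le_rfl hz')).congr_deriv ?_
    field_simp
    linear_combination arcsinSqSeriesDeriv_ode hz' + arcsinSqSeriesDeriv 2 z * hsq
  · exact (hasDerivAt_arcsin hz.1.ne' hz.2.ne).const_mul 2
  · simp [arcsinSqSeriesDeriv, arcsinSqTermDeriv_one]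

theorem hasSum_arcsin_sq {y : ℝ} (hy : |y| < 1) :
    HasSum (fun k => arcsinSqCoeff k * y ^ (2 * k + 2)) (arcsin y ^ 2) := by
  have hsum : EqOn (arcsinSqSeriesDeriv 0) (fun z => arcsin z ^ 2) (Ioo (-1) 1) := by
    refine isOpen_Ioo.eqOn_of_hasDerivAt isPreconnected_Ioo
      (fun z hz => hasDerivAt_arcsinSqSeriesDeriv zero_le_one (abs_lt.2 hz)) (fun z hz => ?_)
      (x := 0) (by norm_num) (by simp [arcsinSqSeriesDeriv, arcsinSqTermDeriv])
    have hz' : |z| < 1 := abs_lt.2 hz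
    have hpos : 0 < √(1 - z ^ 2) := sqrt_pos.2 (sub_pos.2 ((sq_lt_one_iff_abs_lt_one z).2 hz'))
    refine ((hasDerivAt_arcsin hz.1.ne' hz.2.ne).pow 2).congr_deriv ?_
    have hW := sqrt_one_sub_sq_mul_arcsinSqSeriesDeriv_one hz'
    field_simp
    simpa using hW.symm
  convert (summable_arcsinSqTermDeriv zero_le_two hy).hasSum using 1
  · simp [arcsinSqTermDeriv]
  · exact (hsum (abs_lt.1 hy)).symm

theorem hasSum_sq_two_div_mul_arcsin {lam h : ℝ} (hlam : 0 ≤ lam) (hh : h ≠ 0)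
    (hlh : lam * h ^ 2 < 4) :
    HasSum (fun k : ℕ => 2 * (k ! : ℝ) ^ 2 / (2 * k + 2)! * h ^ (2 * k) * lam ^ (k + 1))
      ((2 / h * arcsin (√lam * h / 2)) ^ 2) := by
  have hs : (√lam * h / 2) ^ 2 = lam * h ^ 2 / 4 := by
    rw [div_pow, mul_pow, sq_sqrt hlam]; norm_num
  have habs : |√lam * h / 2| < 1 := by
    rw [← sq_lt_one_iff_abs_lt_one, hs]; linarith
  rw [show (2 / h * arcsin (√lam * h / 2)) ^ 2 = 4 / h ^ 2 * arcsin (√lam * h / 2) ^ 2 by ring]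
  refine ((hasSum_arcsin_sq habs).mul_left (4 / h ^ 2)).congr_fun fun k => ?_
  have hpow : (√lam * h / 2) ^ (2 * k + 2) = (lam * h ^ 2 / 4) ^ (k + 1) := by
    rw [← hs, ← pow_mul]; ring_nf
  rw [hpow, arcsinSqCoeff, div_pow, mul_pow, ← pow_mul, pow_succ (4 : ℝ) k]
  field_simp
  ring

theorem eq_zero_of_hasDerivAt_harmonic {u v : ℝ → ℝ} {ω : ℝ}
    (hu : ∀ p, HasDerivAt u (v p) p) (hv : ∀ p, HasDerivAt v (-ω ^ 2 * u p) p)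
    (hu₀ : u 0 = 0) (hv₀ : v 0 = 0) (p : ℝ) : u p = 0 := by
  have henergy : ∀ p, HasDerivAt (fun p => v p ^ 2 + ω ^ 2 * u p ^ 2) 0 p := fun p =>
    (((hv p).pow 2).add (((hu p).pow 2).const_mul (ω ^ 2))).congr_deriv (by ring)
  have hv_zero : ∀ p, v p = 0 := by
    intro p
    have h := is_const_of_deriv_eq_zero (fun p => (henergy p).differentiableAt)
      (fun p => (henergy p).deriv) p 0
    simp only [hu₀, hv₀] at h
    nlinarith [sq_nonneg (v p), sq_nonneg (ω * u p)]
  have hu_zero := is_const_of_deriv_eq_zero (fun p => (hu p).differentiableAt)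
    (fun p => (hu p).deriv.trans (hv_zero p)) p 0
  rwa [hu₀] at hu_zero

theorem apply_add_add_apply_sub_eq_two_mul_cos_mul {x : ℝ → ℝ} {ω : ℝ}
    (hx : Differentiable ℝ x) (hx' : Differentiable ℝ (deriv x))
    (hode : ∀ t, deriv (deriv x) t = -ω ^ 2 * x t) (t h : ℝ) :
    x (t + h) + x (t - h) = 2 * cos (ω * h) * x t := by
  have hcos : ∀ p, HasDerivAt (fun p => cos (ω * p)) (-sin (ω * p) * ω) p := fun p =>
    ((hasDerivAt_id p).const_mul ω).cos.congr_deriv (by simp)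
  have hsin : ∀ p, HasDerivAt (fun p => sin (ω * p)) (cos (ω * p) * ω) p := fun p =>
    ((hasDerivAt_id p).const_mul ω).sin.congr_deriv (by simp)
  have := eq_zero_of_hasDerivAt_harmonic (ω := ω)
    (u := fun p => x (t + p) + x (t - p) - 2 * cos (ω * p) * x t)
    (v := fun p => deriv x (t + p) - deriv x (t - p) + 2 * ω * sin (ω * p) * x t)
    (fun p => ((((hx _).hasDerivAt.comp_const_add t p).add
      ((hx _).hasDerivAt.comp_const_sub t p)).sub
      (((hcos p).const_mul 2).mul_const (x t))).congr_deriv (by ring))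
    (fun p => ((((hx' _).hasDerivAt.comp_const_add t p).sub
      ((hx' _).hasDerivAt.comp_const_sub t p)).add
      (((hsin p).const_mul (2 * ω)).mul_const (x t))).congr_deriv
        (by rw [hode, hode]; ring))
    (by simp; ring) (by simp) h
  linear_combination this

theorem cos_two_mul_arcsin {y : ℝ} (hy₁ : -1 ≤ y) (hy₂ : y ≤ 1) :
    cos (2 * arcsin y) = 1 - 2 * y ^ 2 := by
  rw [cos_two_mul, cos_sq', sin_arcsin hy₁ hy₂]
  ring

/-- **Closed form of the modified equation of the leapfrog discretization of the linear
oscillator.** For `λ > 0`, `h > 0` with `λh² < 4`, the series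
`Σ_{k=1}^∞ (2((k−1)!)²/(2k)!) h^{2k−2} λ^k` converges with sum
`((2/h) arcsin(√λ h/2))²` (below the series is indexed by `k ∈ ℕ`, the term shown being
the one for `k+1`). Consequently the modified equation
`ẍ = −((2/h) arcsin(√λ h/2))² x` is convergent and exact: any solution of it satisfies
the discretization `(x(t+h) − 2x(t) + x(t−h))/h² = −λ x(t)` of `ẍ = −λx`. -/
theorem modified_equation_linear_oscillator (lam h : ℝ) (hlam : 0 < lam) (hh : 0 < h)
    (hlh : lam * h ^ 2 < 4) :
    HasSum
      (fun k : ℕ => 2 * ((Nat.factorial k : ℝ)) ^ 2 / (Nat.factorial (2 * k + 2) : ℝ)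
        * h ^ (2 * k) * lam ^ (k + 1))
      (((2 / h) * Real.arcsin (Real.sqrt lam * h / 2)) ^ 2) ∧
    (∀ x : ℝ → ℝ,
      (∀ t, DifferentiableAt ℝ x t) →
      (∀ t, DifferentiableAt ℝ (deriv x) t) →
      (∀ t, deriv (deriv x) t =
        -(((2 / h) * Real.arcsin (Real.sqrt lam * h / 2)) ^ 2) * x t) →
      ∀ t : ℝ, (x (t + h) - 2 * x t + x (t - h)) / h ^ 2 = -lam * x t) := by
  refine ⟨hasSum_sq_two_div_mul_arcsin hlam.le hh.ne' hlh, fun x hx hx' hode t => ?_⟩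
  set s := √lam * h / 2
  have hs : s ^ 2 = lam * h ^ 2 / 4 := by
    rw [div_pow, mul_pow, sq_sqrt hlam.le]; norm_num
  have hcos : cos (2 / h * arcsin s * h) = 1 - lam * h ^ 2 / 2 := by
    have hs₁ : |s| ≤ 1 := by rw [← sq_le_one_iff_abs_le_one, hs]; linarith
    rw [show 2 / h * arcsin s * h = 2 * arcsin s by field_simp,
      cos_two_mul_arcsin (abs_le.1 hs₁).1 (abs_le.1 hs₁).2, hs]
    ring
  have hscheme := apply_add_add_apply_sub_eq_two_mul_cos_mul hx hx' hode t h
  rw [hcos] at hscheme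
  field_simp
  linear_combination hscheme
end

section
/- Let x : ℝ → ℝ² be a twice differentiable curve with x(t) ≠ 0 for all t, and consider the Lagrangian L̄(x, v) = x₁ v₁ / |x|³ on (ℝ² \ {0}) × ℝ². Then the Euler–Lagrange expression of L̄ along x equals (d/dt)[(∂L̄/∂v)(x(t), ẋ(t))] − (∂L̄/∂x)(x(t), ẋ(t)) = (3/|x(t)|⁵) · (−x₁(t) x₂(t) ẋ₂(t), x₁(t) x₂(t) ẋ₁(t)) for all t; i.e., EL(x₁ẋ₁/|x|³) = (3/|x|⁵)[−x₁x₂ẋ₂, x₁x₂ẋ₁]ᵀ. -/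
/-!
The Lagrangian is linear in the velocity, `L(q, v) = f(q) ℓ(v)` with `ℓ = v ↦ v₀` and
`f(q) = q₀/|q|³`. Then `∂L/∂v = f(q) ℓ` does not depend on `v`, and the Euler–Lagrange
expression collapses to the first-order quantity `Df(ẋ) ℓ(w) - ℓ(ẋ) Df(w)` (the exterior
derivative of the one-form `f ℓ`, evaluated on `ẋ` and `w`). Since
`Df(u) = ℓ(u)/|q|³ - 3 ℓ(q) ⟪q, u⟫/|q|⁵`, the `|q|⁻³` terms cancel, leaving
`3 ℓ(q)/|q|⁵ (ℓ(ẋ) ⟪q, w⟫ - ℓ(w) ⟪q, ẋ⟫)`.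
-/

open scoped RealInnerProductSpace

section LinearInVelocity

variable {E : Type*} [NormedAddCommGroup E] [NormedSpace ℝ E]

/-- `EL(L)(t)` paired with a direction `w`. -/
noncomputable def eulerLagrange (L : E → E → ℝ) (x : ℝ → E) (t : ℝ) (w : E) : ℝ :=
  deriv (fun s => fderiv ℝ (L (x s)) (deriv x s) w) t
    - fderiv ℝ (fun q => L q (deriv x t)) (x t) w

theorem eulerLagrange_of_eq_mul_clm {L : E → E → ℝ} {f : E → ℝ} {ℓ : E →L[ℝ] ℝ}
    (hL : ∀ q v, L q v = f q * ℓ v) {x : ℝ → E} {t : ℝ} (hx : DifferentiableAt ℝ x t)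
    (hf : DifferentiableAt ℝ f (x t)) (w : E) :
    eulerLagrange L x t w
      = fderiv ℝ f (x t) (deriv x t) * ℓ w - ℓ (deriv x t) * fderiv ℝ f (x t) w := by
  obtain rfl : L = fun q v => f q * ℓ v := funext₂ hL
  have hmomentum : ∀ s, fderiv ℝ (fun v => f (x s) * ℓ v) (deriv x s) w = f (x s) * ℓ w :=
    fun s => by simp [(ℓ.hasFDerivAt.const_mul (f (x s))).fderiv]
  have hf_comp : HasDerivAt (fun s => f (x s)) (fderiv ℝ f (x t) (deriv x t)) t :=
    hf.hasFDerivAt.comp_hasDerivAt t hx.hasDerivAt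
  simp only [eulerLagrange, hmomentum, (hf_comp.mul_const (ℓ w)).deriv, fderiv_mul_const hf,
    FunLike.coe_smul, Pi.smul_apply, smul_eq_mul]

end LinearInVelocity

section InnerProductSpace

variable {F : Type*} [NormedAddCommGroup F] [InnerProductSpace ℝ F]

theorem hasFDerivAt_norm_pow_three (q : F) :
    HasFDerivAt (fun q : F => ‖q‖ ^ 3) ((3 * ‖q‖) • innerSL ℝ q) q := by
  have h := hasFDerivAt_norm_rpow q (p := 3) (by norm_num)
  norm_num [Real.rpow_natCast] at h
  exact_mod_cast h

theorem hasFDerivAt_clm_div_norm_pow_three (ℓ : F →L[ℝ] ℝ) {q : F} (hq : q ≠ 0) :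
    HasFDerivAt (fun q => ℓ q / ‖q‖ ^ 3)
      ((‖q‖ ^ 3)⁻¹ • ℓ - (3 * ℓ q / ‖q‖ ^ 5) • innerSL ℝ q) q := by
  have hr : ‖q‖ ≠ 0 := norm_ne_zero_iff.mpr hq
  have hinv := (hasFDerivAt_inv (pow_ne_zero 3 hr)).comp q (hasFDerivAt_norm_pow_three q)
  simp_rw [div_eq_mul_inv]
  refine (ℓ.hasFDerivAt.fun_mul hinv).congr_fderiv ?_
  ext u
  simp only [ContinuousLinearMap.comp_smulₛₗ, Real.ringHom_apply, Function.comp_apply,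
    add_apply, smul_apply, sub_apply,
    ContinuousLinearMap.comp_apply, coe_innerSL_apply, ContinuousLinearMap.toSpanSingleton_apply,
    smul_eq_mul, mul_neg]
  field_simp
  ring

theorem eulerLagrange_of_eq_mul_div_norm_pow_three {L : F → F → ℝ} {ℓ : F →L[ℝ] ℝ}
    (hL : ∀ q v, L q v = ℓ q * ℓ v / ‖q‖ ^ 3) {x : ℝ → F} {t : ℝ}
    (hx : DifferentiableAt ℝ x t) (hx0 : x t ≠ 0) (w : F) :
    eulerLagrange L x t w = 3 * ℓ (x t) / ‖x t‖ ^ 5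
      * (ℓ (deriv x t) * ⟪x t, w⟫ - ℓ w * ⟪x t, deriv x t⟫) := by
  have hf := hasFDerivAt_clm_div_norm_pow_three ℓ hx0
  rw [eulerLagrange_of_eq_mul_clm (f := fun q => ℓ q / ‖q‖ ^ 3) (fun q v => by rw [hL]; ring) hx
    hf.differentiableAt, hf.fderiv]
  simp only [sub_apply, smul_apply, smul_eq_mul,
    coe_innerSL_apply]
  ring

end InnerProductSpace

theorem EL_modified_lagrangian_term_general (x : ℝ → EuclideanSpace ℝ (Fin 2))
    (hx1 : ∀ t, DifferentiableAt ℝ x t)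
    (hx0 : ∀ t, x t ≠ 0)
    (L : EuclideanSpace ℝ (Fin 2) → EuclideanSpace ℝ (Fin 2) → ℝ)
    (hL : ∀ q v, L q v = q 0 * v 0 / ‖q‖ ^ 3) :
    ∀ t : ℝ,
      (deriv (fun s => fderiv ℝ (fun v => L (x s) v) (deriv x s)
            (EuclideanSpace.single 0 1)) t
          - fderiv ℝ (fun q => L q (deriv x t)) (x t) (EuclideanSpace.single 0 1)
        = 3 / ‖x t‖ ^ 5 * (-(x t 0 * x t 1 * deriv x t 1))) ∧
      (deriv (fun s => fderiv ℝ (fun v => L (x s) v) (deriv x s)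
            (EuclideanSpace.single 1 1)) t
          - fderiv ℝ (fun q => L q (deriv x t)) (x t) (EuclideanSpace.single 1 1)
        = 3 / ‖x t‖ ^ 5 * (x t 0 * x t 1 * deriv x t 0)) := by
  intro t
  have hEL := eulerLagrange_of_eq_mul_div_norm_pow_three (ℓ := EuclideanSpace.proj 0) hL
    (hx1 t) (hx0 t)
  have hinner : ⟪x t, deriv x t⟫ = x t 0 * deriv x t 0 + x t 1 * deriv x t 1 := by
    simp [PiLp.inner_apply, Fin.sum_univ_two, mul_comm]
  refine ⟨(hEL _).trans ?_, (hEL _).trans ?_⟩ <;>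
  · simp only [PiLp.proj_apply, EuclideanSpace.inner_single_right, PiLp.single_eq_same,
      PiLp.single_eq_of_ne _ zero_ne_one, Real.ringHom_apply, hinner]
    ring

/-- **Euler–Lagrange expression of the modified-Lagrangian term `L̄(x,v) = x₁v₁/|x|³`
for the two-dimensional Kepler problem.** Along any twice differentiable curve
`x : ℝ → ℝ²` with `x(t) ≠ 0`,
`EL(x₁ẋ₁/|x|³) = (3/|x|⁵)[−x₁x₂ẋ₂, x₁x₂ẋ₁]ᵀ` componentwise. -/
theorem EL_modified_lagrangian_term (x : ℝ → EuclideanSpace ℝ (Fin 2))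
    (hx1 : ∀ t, DifferentiableAt ℝ x t)
    (hx2 : ∀ t, DifferentiableAt ℝ (deriv x) t)
    (hx0 : ∀ t, x t ≠ 0)
    (L : EuclideanSpace ℝ (Fin 2) → EuclideanSpace ℝ (Fin 2) → ℝ)
    (hL : ∀ q v, L q v = q 0 * v 0 / ‖q‖ ^ 3) :
    ∀ t : ℝ,
      (deriv (fun s => fderiv ℝ (fun v => L (x s) v) (deriv x s)
            (EuclideanSpace.single 0 1)) t
          - fderiv ℝ (fun q => L q (deriv x t)) (x t) (EuclideanSpace.single 0 1)
        = 3 / ‖x t‖ ^ 5 * (-(x t 0 * x t 1 * deriv x t 1))) ∧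
      (deriv (fun s => fderiv ℝ (fun v => L (x s) v) (deriv x s)
            (EuclideanSpace.single 1 1)) t
          - fderiv ℝ (fun q => L q (deriv x t)) (x t) (EuclideanSpace.single 1 1)
        = 3 / ‖x t‖ ^ 5 * (x t 0 * x t 1 * deriv x t 0)) :=
  EL_modified_lagrangian_term_general x hx1 hx0 L hL
end
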